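/- arXiv:2311.15234 — 2 statements merged into one kernel-verified Lean document; each statement's English description precedes it below -/
import Mathlib

section
/- Let X be a compact metric space, T : X → X continuous, λ a Borel probability measure on X, and A ⊆ X a metric attractor of T with respect to λ. Then ω(x) = A for λ-almost every x ∈ X. -/
open Filter Topology MeasureTheory Set
open scoped ENNReal NNReal

/-- Cylinder of a finite word in Cantor space: the set of sequences beginning with `w`. -/
def cyl {𝒜 : Type*} (w : List 𝒜) : Set (ℕ → 𝒜) :=
  {x | ∀ i : Fin w.length, x i = w.get i}

/-- The shift map on Cantor space. -/
def shiftMap {𝒜 : Type*} (x : ℕ → 𝒜) : ℕ → 𝒜 := fun i => x (i + 1)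

/-- ω-limit set of `x` under iteration of `T`: the set of accumulation points of the orbit. -/
def omegaSet {X : Type*} [TopologicalSpace X] (T : X → X) (x : X) : Set X :=
  {y | MapClusterPt y Filter.atTop fun n => T^[n] x}

/-- Realm of attraction `ρ(A) = {x : ω(x) ⊆ A}`. -/
def realm {X : Type*} [TopologicalSpace X] (T : X → X) (A : Set X) : Set X :=
  {x | omegaSet T x ⊆ A}

/-- `A` is a topological attractor of `T`: a closed invariant set whose realm of attraction is
residual, and such that no strictly smaller closed subset has nonmeager realm of attraction. -/
def IsTopAttractor {X : Type*} [TopologicalSpace X] (T : X → X) (A : Set X) : Prop :=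
  IsClosed A ∧ Set.MapsTo T A A ∧ realm T A ∈ residual X ∧
    ∀ A' : Set X, IsClosed A' → A' ⊂ A → IsMeagre (realm T A')

/-- `A` is a metric attractor of `T` w.r.t. `lam`: a closed invariant set whose realm of
attraction has full measure, and no strictly smaller closed subset has realm of positive
measure. -/
def IsMetricAttractor {X : Type*} [TopologicalSpace X] [MeasurableSpace X]
    (T : X → X) (lam : Measure X) (A : Set X) : Prop :=
  IsClosed A ∧ Set.MapsTo T A A ∧ lam (realm T A) = 1 ∧
    ∀ A' : Set X, IsClosed A' → A' ⊂ A → lam (realm T A') = 0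

/-- Empirical (Birkhoff) measures `ν_n(x) = (1/n) ∑_{i<n} δ_{T^i x}`. -/
noncomputable def empMeasure {X : Type*} [MeasurableSpace X] (T : X → X) (x : X) (n : ℕ) :
    Measure X :=
  (n : ℝ≥0∞)⁻¹ • ∑ i ∈ Finset.range n, Measure.dirac (T^[i] x)

/-- Weak-* convergence of a sequence of measures: integrals of continuous functions converge. -/
def WeakTendsto {X : Type*} [TopologicalSpace X] [MeasurableSpace X]
    (μs : ℕ → Measure X) (μ : Measure X) : Prop :=
  ∀ φ : C(X, ℝ), Filter.Tendsto (fun n => ∫ x, φ x ∂(μs n)) Filter.atTop (nhds (∫ x, φ x ∂μ))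

/-- Topological support of a measure: points all of whose open neighbourhoods have positive
measure. -/
def measSupport {X : Type*} [TopologicalSpace X] [MeasurableSpace X]
    (μ : Measure X) : Set X :=
  {x | ∀ U : Set X, IsOpen U → x ∈ U → 0 < μ U}

/-- `A` is a statistical (physical) attractor of `T` w.r.t. `lam`: there is a `T`-invariant
probability measure `μ` with support `A` such that for `lam`-a.e. `x` the empirical measures
converge weak-* to `μ`. -/
def IsStatAttractor {X : Type*} [TopologicalSpace X] [MeasurableSpace X]
    (T : X → X) (lam : Measure X) (A : Set X) : Prop :=
  IsClosed A ∧ ∃ μ : Measure X, IsProbabilityMeasure μ ∧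
    Measure.map T μ = μ ∧ measSupport μ = A ∧
    ∀ᵐ x ∂lam, WeakTendsto (empMeasure T x) μ

/-- `A` is strongly attracting: there is an open `U ⊇ A` with `T (closure U) ⊆ U` and
`A = ⋂ₙ Tⁿ(U)`. -/
def StronglyAttracting {X : Type*} [TopologicalSpace X] (T : X → X) (A : Set X) : Prop :=
  ∃ U : Set X, IsOpen U ∧ A ⊆ U ∧ T '' (closure U) ⊆ U ∧ A = ⋂ n : ℕ, T^[n] '' U

/-- `S` is Σ₁ (recursively enumerable). -/
def SigmaOne {I : Type*} [Primcodable I] (S : Set I) : Prop :=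
  ∃ f : I × ℕ → Bool, Computable f ∧ ∀ i, i ∈ S ↔ ∃ a, f (i, a) = true

/-- `S` is Π₁ (co-r.e.). -/
def PiOne {I : Type*} [Primcodable I] (S : Set I) : Prop := SigmaOne Sᶜ

/-- `S` is Σ₂. -/
def SigmaTwo {I : Type*} [Primcodable I] (S : Set I) : Prop :=
  ∃ f : I × ℕ × ℕ → Bool, Computable f ∧ ∀ i, i ∈ S ↔ ∃ a, ∀ b, f (i, a, b) = true

/-- `S` is Π₂. -/
def PiTwo {I : Type*} [Primcodable I] (S : Set I) : Prop :=
  ∃ f : I × ℕ × ℕ → Bool, Computable f ∧ ∀ i, i ∈ S ↔ ∀ a, ∃ b, f (i, a, b) = true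

/-- A map of Cantor space is computable if `(T x) n` is computed by a computable function from
`n` and the finite prefix `[x 0, …, x (α n)]` of `x`, for a computable modulus `α`. -/
def CantorComputable {𝒜 : Type} [Primcodable 𝒜] (T : (ℕ → 𝒜) → (ℕ → 𝒜)) : Prop :=
  ∃ (α : ℕ → ℕ) (β : ℕ → List 𝒜 → 𝒜), Computable α ∧ Computable₂ β ∧
    ∀ (x : ℕ → 𝒜) (n : ℕ), T x n = β n (List.ofFn fun i : Fin (α n + 1) => x i)

/-- A Borel probability measure on Cantor space is computable if the measures of finite unions
of cylinders are uniformly lower-computable: `lam(⋃_{w ∈ W} [w]) = sup_k q (W, k)` for a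
computable `q`. -/
def ComputableCantorMeasure {𝒜 : Type} [Primcodable 𝒜] [MeasurableSpace 𝒜]
    (lam : Measure (ℕ → 𝒜)) : Prop :=
  ∃ q : List (List 𝒜) × ℕ → ℚ, Computable q ∧
    ∀ W : List (List 𝒜), (lam (⋃ w ∈ W, cyl w)).toReal = ⨆ k, (q (W, k) : ℝ)

/-- Indices of machines halting on input 0. -/
def HaltSet : Set ℕ := {e | ((Denumerable.ofNat Nat.Partrec.Code e).eval 0).Dom}

/-- Indices of total machines. -/
def TotSet : Set ℕ := {e | ∀ n, ((Denumerable.ofNat Nat.Partrec.Code e).eval n).Dom}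

/-- Indices of machines with finite domain. -/
def FinSet : Set ℕ := {e | {n | ((Denumerable.ofNat Nat.Partrec.Code e).eval n).Dom}.Finite}

/-! ω-limit sets are closed, so if `ω(x) ⊊ A` then some set `U` of a countable basis meets `A`
but misses `ω(x)`, and `x` lies in the realm of the closed proper subset `A \ U`. Minimality makes
each of these countably many realms null. For `ω(x) ⊆ A` almost surely one needs the realm of `A`
to be measurable: in a compact space it is the set of points whose orbit tends to `𝓝ˢ A`, and this
filter is countably generated by the thickenings of `A`. -/

section Topology

variable {X : Type*} [TopologicalSpace X]

theorem isClosed_omegaSet (T : X → X) (x : X) : IsClosed (omegaSet T x) :=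
  isClosed_setOfPred_clusterPt

theorem forall_mapClusterPt_mem_iff_tendsto_nhdsSet [CompactSpace X] [RegularSpace X]
    {ι : Type*} {l : Filter ι} {u : ι → X} {A : Set X} (hA : IsClosed A) :
    (∀ y, MapClusterPt y l u → y ∈ A) ↔ Tendsto u l (𝓝ˢ A) := by
  refine ⟨fun h => ?_, fun h y hy => ?_⟩
  · rw [(hasBasis_nhdsSet A).tendsto_right_iff]
    rintro U ⟨hU, hAU⟩
    by_contra hfreq
    obtain ⟨y, hyU, hy⟩ :=
      hU.isClosed_compl.isCompact.exists_mapClusterPt_of_frequently (not_eventually.1 hfreq)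
    exact hyU (hAU (h y hy))
  · by_contra hyA
    have hdisj : Disjoint (𝓝 y) (𝓝ˢ A) :=
      (disjoint_nhdsSet_nhds.2 (hA.closure_eq.symm ▸ hyA)).symm
    exact clusterPt_iff_not_disjoint.1 (ClusterPt.mono hy h) hdisj

theorem realm_eq_setOf_tendsto_nhdsSet [CompactSpace X] [RegularSpace X] (T : X → X)
    {A : Set X} (hA : IsClosed A) :
    realm T A = {x | Tendsto (fun n => T^[n] x) atTop (𝓝ˢ A)} :=
  Set.ext fun _ => forall_mapClusterPt_mem_iff_tendsto_nhdsSet hA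

theorem exists_mem_countableBasis_mem_realm_diff [SecondCountableTopology X] {T : X → X}
    {A : Set X} {x : X} (hx : omegaSet T x ⊆ A) (hxA : ¬A ⊆ omegaSet T x) :
    ∃ U ∈ TopologicalSpace.countableBasis X, (A ∩ U).Nonempty ∧ x ∈ realm T (A \ U) := by
  obtain ⟨a, haA, haω⟩ := not_subset.1 hxA
  obtain ⟨U, hU, haU, hUω⟩ := (TopologicalSpace.isBasis_countableBasis X).exists_subset_of_mem_open
    haω (isClosed_omegaSet T x).isOpen_compl
  exact ⟨U, hU, ⟨a, haA, haU⟩, fun y hy => ⟨hx hy, fun hyU => hUω hyU hy⟩⟩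

end Topology

theorem Metric.isCountablyGenerated_nhdsSet {X : Type*} [PseudoMetricSpace X] {K : Set X}
    (hK : IsCompact K) : (𝓝ˢ K).IsCountablyGenerated := by
  refine ((hasBasis_nhdsSet_thickening hK).to_hasBasis (p' := fun _ : ℕ => True) (fun δ hδ => ?_)
    fun n _ => ⟨1 / (n + 1), Nat.one_div_pos_of_nat, subset_rfl⟩).isCountablyGenerated
  obtain ⟨n, hn⟩ := exists_nat_one_div_lt hδ
  exact ⟨n, trivial, thickening_mono hn.le K⟩

instance isMeasurablyGenerated_nhdsSet {X : Type*} [TopologicalSpace X] [MeasurableSpace X]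
    [OpensMeasurableSpace X] (A : Set X) : (𝓝ˢ A).IsMeasurablyGenerated where
  exists_measurable_subset s hs := by
    obtain ⟨U, hU, hAU, hUs⟩ := mem_nhdsSet_iff_exists.1 hs
    exact ⟨U, hU.mem_nhdsSet.2 hAU, hU.measurableSet, hUs⟩

section Measure

variable {X : Type*} [MeasurableSpace X] {T : X → X} {lam : Measure X} {A : Set X}

theorem measurableSet_realm [PseudoMetricSpace X] [CompactSpace X] [OpensMeasurableSpace X]
    (hT : Measurable T) (hA : IsClosed A) : MeasurableSet (realm T A) := by
  have := Metric.isCountablyGenerated_nhdsSet hA.isCompact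
  rw [realm_eq_setOf_tendsto_nhdsSet T hA]
  exact measurableSet_tendsto _ fun n => hT.iterate n

theorem ae_omegaSet_subset [PseudoMetricSpace X] [CompactSpace X] [OpensMeasurableSpace X]
    [IsProbabilityMeasure lam] (hT : Measurable T) (hA : IsClosed A)
    (hfull : lam (realm T A) = 1) : ∀ᵐ x ∂lam, omegaSet T x ⊆ A :=
  (ae_mem_iff_measure_eq (measurableSet_realm hT hA).nullMeasurableSet).2 (by simp [hfull])

theorem ae_subset_omegaSet [TopologicalSpace X] [SecondCountableTopology X] (hA : IsClosed A)
    (hmin : ∀ A' : Set X, IsClosed A' → A' ⊂ A → lam (realm T A') = 0) :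
    ∀ᵐ x ∂lam, omegaSet T x ⊆ A → A ⊆ omegaSet T x := by
  let S := {U ∈ TopologicalSpace.countableBasis X | (A ∩ U).Nonempty}
  have hS : S.Countable := (TopologicalSpace.countable_countableBasis X).mono (sep_subset _ _)
  have hnull : ∀ᵐ x ∂lam, ∀ U ∈ S, x ∉ realm T (A \ U) := by
    refine (ae_ball_iff hS).2 fun U ⟨hU, a, haA, haU⟩ => measure_eq_zero_iff_ae_notMem.1 ?_
    refine hmin _ (hA.sdiff (TopologicalSpace.isOpen_of_mem_countableBasis hU)) ?_
    exact (ssubset_iff_of_subset sdiff_subset).2 ⟨a, haA, fun h => h.2 haU⟩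
  filter_upwards [hnull] with x hx hxA
  by_contra hω
  obtain ⟨U, hU, hAU, hxU⟩ := exists_mem_countableBasis_mem_realm_diff hxA hω
  exact hx U ⟨hU, hAU⟩ hxU

end Measure

/-- If `A` is a metric attractor of a continuous map of a compact metric space w.r.t. a Borel
probability measure `lam`, then `ω(x) = A` for `lam`-a.e. `x`. -/
theorem stmt2 {X : Type*} [MetricSpace X] [CompactSpace X]
    [MeasurableSpace X] [BorelSpace X]
    {T : X → X} (hT : Continuous T) (lam : Measure X) [IsProbabilityMeasure lam]
    {A : Set X} (hA : IsMetricAttractor T lam A) :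
    ∀ᵐ x ∂lam, omegaSet T x = A := by
  obtain ⟨hAc, -, hfull, hmin⟩ := hA
  filter_upwards [ae_omegaSet_subset hT.measurable hAc hfull, ae_subset_omegaSet hAc hmin]
    with x hsub hsup
  exact hsub.antisymm (hsup hsub)
end

section
/- Let X be the Cantor space over a finite alphabet 𝒜, T : X → X a computable map, and A ⊆ X a nonempty closed T-invariant set on which T is minimal, i.e. every point of A has forward orbit dense in A. Let n ∈ {1, 2}. If the inner collection {w : [w] ∩ A ≠ ∅} is a Π_n set of words, then it is also a Σ_n set of words. -/
open Filter Topology MeasureTheory Set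
open scoped ENNReal NNReal

/-! Minimality and compactness make every cylinder `[w]` meeting `A` a uniform target: some `N`
bounds the time every point of `A` needs to enter `[w]`. As `T` is computable, a long enough
prefix `v` of `x` determines a prefix of each `T^k x`, `k ≤ N`. Hence `[w]` meets `A` iff for some
`N` and `L` every word `v` of length `L` that meets `A` has an image after at most `N` steps
beginning with `w` (nonemptiness of `A` gives the converse). The quantifier over `v` is bounded and
"`v` meets `A`" occurs only negatively, so a Π_n description of the inner collection yields a
Σ_n one: the refutations for the finitely many `v` missing `A` are guessed together with
`N` and `L`. -/

namespace Computable

variable {α β σ : Type*} [Primcodable α] [Primcodable β] [Primcodable σ]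

theorem nat_iterate {f : α → ℕ} {g : α → β} {h : α → β → β} (hf : Computable f)
    (hg : Computable g) (hh : Computable₂ h) : Computable fun a => (h a)^[f a] (g a) :=
  (nat_rec hf hg (hh.comp fst (snd.comp snd)).to₂).of_eq fun a => by
    induction f a <;> simp [*, Function.iterate_succ_apply']

theorem list_map {f : α → List β} {g : α → β → σ} (hf : Computable f) (hg : Computable₂ g) :
    Computable fun a => (f a).map (g a) := by
  have step : Computable₂ fun a (p : ℕ × List σ) =>
      Option.casesOn (motive := fun _ => List σ) (f a)[p.1]? p.2 fun b => p.2 ++ [g a b] :=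
    option_casesOn (list_getElem?.comp (hf.comp fst) (fst.comp snd)) (snd.comp snd)
      (list_concat.comp (snd.comp (snd.comp fst)) (hg.comp (fst.comp fst) snd)).to₂
  refine (nat_rec (list_length.comp hf) (const []) step).of_eq fun a => ?_
  suffices ∀ n, Nat.rec (motive := fun _ => List σ) []
      (fun y IH => Option.casesOn (motive := fun _ => List σ) (f a)[y]? IH fun b => IH ++ [g a b])
      n = ((f a).take n).map (g a) by
    simp [this]
  intro n
  induction n with
  | zero => simp
  | succ n ih =>
    rcases h : (f a)[n]? with _ | b
    · have hn : (f a).length ≤ n := List.getElem?_eq_none_iff.mp h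
      simp [ih, h, List.take_of_length_le hn, List.take_of_length_le (hn.trans n.le_succ)]
    · simp [ih, h, List.take_add_one]

theorem list_all {f : α → List β} {g : α → β → Bool} (hf : Computable f) (hg : Computable₂ g) :
    Computable fun a => (f a).all (g a) := by
  have hall : Primrec fun l : List Bool => l.all id :=
    (Primrec.list_foldr .id (.const true)
      (Primrec.and.comp (Primrec.fst.comp .snd) (Primrec.snd.comp .snd)).to₂ |>.of_eq)
      fun l => by induction l <;> simp_all
  exact (hall.to_comp.comp (list_map hf hg)).of_eq fun a => by simp

theorem list_any {f : α → List β} {g : α → β → Bool} (hf : Computable f) (hg : Computable₂ g) :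
    Computable fun a => (f a).any (g a) := by
  have hany : Primrec fun l : List Bool => l.any id :=
    (Primrec.list_foldr .id (.const false)
      (Primrec.or.comp (Primrec.fst.comp .snd) (Primrec.snd.comp .snd)).to₂ |>.of_eq)
      fun l => by induction l <;> simp_all
  exact (hany.to_comp.comp (list_map hf hg)).of_eq fun a => by simp

end Computable

theorem List.exists_map_fst_eq_of_forall_exists {J : Type*} {P : J → ℕ → Prop} :
    ∀ l : List J, (∀ j ∈ l, ∃ a, P j a) →
      ∃ σ : List (J × ℕ), σ.map Prod.fst = l ∧ ∀ p ∈ σ, P p.1 p.2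
  | [], _ => ⟨[], rfl, by simp⟩
  | j :: l, h => by
    obtain ⟨a, ha⟩ := h j (by simp)
    obtain ⟨σ, hσ, hP⟩ := exists_map_fst_eq_of_forall_exists l fun j hj => h j (by simp [hj])
    exact ⟨(j, a) :: σ, by simp [hσ], by simpa [ha] using hP⟩

section ArithmeticHierarchy

open Computable Encodable

variable {I J W : Type*} [Primcodable I] [Primcodable J] [Primcodable W]

theorem sigmaOne_of_exists {S : Set I} {f : I → W → Bool} (hf : Computable₂ f)
    (hS : ∀ i, i ∈ S ↔ ∃ w, f i w = true) : SigmaOne S := by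
  refine ⟨fun p => ((decode p.2).map (f p.1)).getD false,
    option_getD (map_decode_iff.2 hf) (const false), fun i => (hS i).trans ⟨?_, ?_⟩⟩
  · rintro ⟨w, hw⟩
    exact ⟨encode w, by simpa [encodek] using hw⟩
  · rintro ⟨a, ha⟩
    rcases h : decode (α := W) a with _ | w
    · simp [h] at ha
    · exact ⟨w, by simpa [h] using ha⟩

theorem sigmaTwo_of_exists_forall {S : Set I} {f : I → W → ℕ → Bool}
    (hf : Computable fun p : I × W × ℕ => f p.1 p.2.1 p.2.2)
    (hS : ∀ i, i ∈ S ↔ ∃ w, ∀ b, f i w b = true) : SigmaTwo S := by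
  have hf' : Computable₂ fun (p : I × ℕ) (w : W) => f p.1 w p.2 :=
    hf.comp (pair (fst.comp fst) (pair snd (snd.comp fst)))
  refine ⟨fun p => ((decode p.2.1).map (fun w => f p.1 w p.2.2)).getD false,
    option_getD ((map_decode_iff.2 hf').comp (pair fst (snd.comp snd)) (fst.comp snd))
      (const false), fun i => (hS i).trans ⟨?_, ?_⟩⟩
  · rintro ⟨w, hw⟩
    exact ⟨encode w, by simpa [encodek] using hw⟩
  · rintro ⟨a, ha⟩
    rcases h : decode (α := W) a with _ | w
    · simpa [h] using ha 0
    · exact ⟨w, by simpa [h] using ha⟩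

variable [DecidableEq J] {S : Set J} {S' : Set I} {F : I → W → List J} {D : I → W → J → Bool}

/- Since `S` occurs only negatively, a witness for `i ∈ S'` is `w` together with the list of
pairs `(j, a)`, `j ∈ F i w`, where `a` refutes `j ∈ S` whenever `D i w j` fails. -/
theorem PiOne.sigmaOne_of_forall_mem (hS : PiOne S) (hF : Computable₂ F)
    (hD : Computable fun p : I × W × J => D p.1 p.2.1 p.2.2)
    (hS' : ∀ i, i ∈ S' ↔ ∃ w, ∀ j ∈ F i w, j ∈ S → D i w j = true) : SigmaOne S' := by
  obtain ⟨g, hg, hgS⟩ := hS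
  refine sigmaOne_of_exists (W := W × List (J × ℕ))
    (f := fun i q => decide (q.2.map Prod.fst = F i q.1) &&
      q.2.all fun p => D i q.1 p.1 || g p) ?_ fun i => (hS' i).trans ⟨?_, ?_⟩
  · have hmap : Computable fun x : I × W × List (J × ℕ) => x.2.2.map Prod.fst :=
      (Primrec.list_map .id (Primrec.fst.comp .snd).to₂).to_comp.comp (snd.comp snd)
    have hall : Computable fun x : I × W × List (J × ℕ) =>
        x.2.2.all fun p => D x.1 x.2.1 p.1 || g p :=
      list_all (snd.comp snd) (Primrec.or.to_comp.comp
        (hD.comp (pair (fst.comp fst) (pair (fst.comp (snd.comp fst)) (fst.comp snd))))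
        (hg.comp snd)).to₂
    exact Primrec.and.to_comp.comp
      (Primrec.eq.decide.to_comp.comp hmap (hF.comp fst (fst.comp snd))) hall
  · rintro ⟨w, hw⟩
    obtain ⟨σ, hσ, hP⟩ := List.exists_map_fst_eq_of_forall_exists
      (P := fun j a => D i w j = true ∨ g (j, a) = true) (F i w) fun j hj => by
        by_cases hjS : j ∈ S
        · exact ⟨0, .inl (hw j hj hjS)⟩
        · obtain ⟨a, ha⟩ := (hgS j).1 hjS
          exact ⟨a, .inr ha⟩
    exact ⟨(w, σ), by simpa [hσ] using hP⟩
  · rintro ⟨⟨w, σ⟩, h⟩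
    simp only [Bool.and_eq_true, decide_eq_true_eq, List.all_eq_true, Bool.or_eq_true] at h
    refine ⟨w, fun j hj hjS => ?_⟩
    obtain ⟨⟨j', a⟩, hmem, rfl⟩ := List.mem_map.1 (h.1 ▸ hj)
    exact (h.2 _ hmem).resolve_right fun hg => (hgS j').2 ⟨a, hg⟩ hjS

theorem PiTwo.sigmaTwo_of_forall_mem (hS : PiTwo S) (hF : Computable₂ F)
    (hD : Computable fun p : I × W × J => D p.1 p.2.1 p.2.2)
    (hS' : ∀ i, i ∈ S' ↔ ∃ w, ∀ j ∈ F i w, j ∈ S → D i w j = true) : SigmaTwo S' := by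
  obtain ⟨g, hg, hgS⟩ := hS
  refine sigmaTwo_of_exists_forall (W := W × List (J × ℕ))
    (f := fun i q b => decide (q.2.map Prod.fst = F i q.1) &&
      q.2.all fun p => D i q.1 p.1 || !g (p.1, p.2, b)) ?_ fun i => (hS' i).trans ⟨?_, ?_⟩
  · have hσ : Computable fun x : I × (W × List (J × ℕ)) × ℕ => x.2.1.2 := snd.comp (fst.comp snd)
    have hmap : Computable fun x : I × (W × List (J × ℕ)) × ℕ => x.2.1.2.map Prod.fst :=
      (Primrec.list_map .id (Primrec.fst.comp .snd).to₂).to_comp.comp hσ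
    have hall : Computable fun x : I × (W × List (J × ℕ)) × ℕ =>
        x.2.1.2.all fun p => D x.1 x.2.1.1 p.1 || !g (p.1, p.2, x.2.2) :=
      list_all hσ (Primrec.or.to_comp.comp
        (hD.comp (pair (fst.comp fst) (pair (fst.comp (fst.comp (snd.comp fst))) (fst.comp snd))))
        (Primrec.not.to_comp.comp (hg.comp (pair (fst.comp snd)
          (pair (snd.comp snd) (snd.comp (snd.comp fst))))))).to₂
    exact Primrec.and.to_comp.comp
      (Primrec.eq.decide.to_comp.comp hmap (hF.comp fst (fst.comp (fst.comp snd)))) hall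
  · rintro ⟨w, hw⟩
    obtain ⟨σ, hσ, hP⟩ := List.exists_map_fst_eq_of_forall_exists
      (P := fun j a => D i w j = true ∨ ∀ b, g (j, a, b) = false) (F i w) fun j hj => by
        by_cases hjS : j ∈ S
        · exact ⟨0, .inl (hw j hj hjS)⟩
        · obtain ⟨a, ha⟩ : ∃ a, ∀ b, g (j, a, b) = false := by
            simpa [hgS j] using hjS
          exact ⟨a, .inr ha⟩
    refine ⟨(w, σ), fun b => ?_⟩
    simp only [hσ, decide_true, Bool.true_and, List.all_eq_true, Bool.or_eq_true,
      Bool.not_eq_eq_eq_not, Bool.not_true]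
    exact fun p hp => (hP p hp).imp_right (· b)
  · rintro ⟨⟨w, σ⟩, h⟩
    simp only [Bool.and_eq_true, decide_eq_true_eq, List.all_eq_true, Bool.or_eq_true,
      Bool.not_eq_eq_eq_not, Bool.not_true] at h
    refine ⟨w, fun j hj hjS => ?_⟩
    obtain ⟨⟨j', a⟩, hmem, rfl⟩ := List.mem_map.1 ((h 0).1 ▸ hj)
    obtain ⟨b, hb⟩ := (hgS j').1 hjS a
    exact ((h b).2 _ hmem).resolve_right (by simp [hb])

end ArithmeticHierarchy

theorem IsCompact.exists_forall_iterate_mem_of_minimal {X : Type*} [TopologicalSpace X]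
    {T : X → X} (hT : Continuous T) {A U : Set X} (hA : IsCompact A)
    (hmin : ∀ x ∈ A, A ⊆ closure (Set.range fun n : ℕ => T^[n] x))
    (hU : IsOpen U) (hUA : (U ∩ A).Nonempty) : ∃ N, ∀ x ∈ A, ∃ k ≤ N, T^[k] x ∈ U := by
  obtain ⟨y, hyU, hyA⟩ := hUA
  have hcover : A ⊆ ⋃ k : ℕ, T^[k] ⁻¹' U := fun x hx => by
    obtain ⟨_, hzU, k, rfl⟩ := mem_closure_iff.1 (hmin x hx hyA) U hU hyU
    exact Set.mem_iUnion.2 ⟨k, hzU⟩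
  obtain ⟨t, ht⟩ := hA.elim_finite_subcover _ (fun k => hU.preimage (hT.iterate k)) hcover
  refine ⟨t.sup id, fun x hx => ?_⟩
  obtain ⟨k, hk, hxk⟩ := Set.mem_iUnion₂.1 (ht hx)
  exact ⟨k, Finset.le_sup (f := id) hk, hxk⟩

section CantorSpace

variable {𝒜 : Type*}

def initSeg (x : ℕ → 𝒜) (m : ℕ) : List 𝒜 := List.ofFn fun i : Fin m => x i

@[simp] theorem length_initSeg (x : ℕ → 𝒜) (m : ℕ) : (initSeg x m).length = m :=
  List.length_ofFn

@[simp] theorem getElem_initSeg (x : ℕ → 𝒜) {m i : ℕ} (h : i < (initSeg x m).length) :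
    (initSeg x m)[i] = x i :=
  List.getElem_ofFn h

theorem take_initSeg (x : ℕ → 𝒜) (n m : ℕ) : (initSeg x m).take n = initSeg x (min n m) :=
  List.ext_getElem (by simp) fun _ _ _ => by simp

theorem mem_cyl_iff_initSeg_eq {x : ℕ → 𝒜} {w : List 𝒜} : x ∈ cyl w ↔ initSeg x w.length = w := by
  simp [List.ext_getElem_iff, cyl, Fin.forall_iff]

theorem take_initSeg_eq_iff {x : ℕ → 𝒜} {w : List 𝒜} {m : ℕ} :
    (initSeg x m).take w.length = w ↔ w.length ≤ m ∧ x ∈ cyl w := by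
  rw [take_initSeg, mem_cyl_iff_initSeg_eq]
  constructor
  · intro h
    have hmin : min w.length m = w.length := by simpa using congrArg List.length h
    exact ⟨min_eq_left_iff.1 hmin, hmin ▸ h⟩
  · rintro ⟨hm, h⟩
    rwa [min_eq_left hm]

variable [TopologicalSpace 𝒜] [DiscreteTopology 𝒜]

theorem isOpen_cyl (w : List 𝒜) : IsOpen (cyl w) := by
  have : cyl w = ⋂ i : Fin w.length, (fun x : ℕ → 𝒜 => x i) ⁻¹' {w.get i} := by
    ext; simp [cyl]
  exact this ▸ isOpen_iInter_of_finite fun i => (isOpen_discrete _).preimage (continuous_apply _)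

theorem continuous_of_apply_eq_ofFn {α : ℕ → ℕ} {β : ℕ → List 𝒜 → 𝒜} {T : (ℕ → 𝒜) → ℕ → 𝒜}
    (hT : ∀ x n, T x n = β n (List.ofFn fun i : Fin (α n + 1) => x i)) : Continuous T := by
  refine continuous_pi fun n => ?_
  simp only [hT]
  exact (continuous_of_discreteTopology (f := fun y : Fin (α n + 1) → 𝒜 => β n (List.ofFn y))).comp
    (continuous_pi fun i => continuous_apply _)

end CantorSpace

section Words

variable (𝒜 : Type*) [Fintype 𝒜]

noncomputable def allWords (L : ℕ) : List (List 𝒜) :=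
  (fun ws => ws.flatMap fun v => (Finset.univ : Finset 𝒜).toList.map (· :: v))^[L] [[]]

variable {𝒜}

theorem mem_allWords {v : List 𝒜} {L : ℕ} : v ∈ allWords 𝒜 L ↔ v.length = L := by
  induction L generalizing v with
  | zero => simp [allWords]
  | succ L ih =>
    rw [allWords, Function.iterate_succ_apply', ← allWords]
    cases v <;> simp [ih]

theorem primrec_allWords [Primcodable 𝒜] : Primrec (allWords 𝒜) :=
  Primrec.nat_iterate .id (.const [[]]) <| Primrec.list_flatMap .snd
    (Primrec.list_map (.const _) (Primrec.list_cons.comp .snd (Primrec.snd.comp .fst)).to₂).to₂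

end Words

section PrefixApproximation

variable {𝒜 : Type*} (α : ℕ → ℕ) (β : ℕ → List 𝒜 → 𝒜)

/- The first `determinedLength α m` coordinates of `T x` depend only on the first `m` coordinates
of `x`; the cap at `m` keeps it computable when `α` is bounded. -/
def determinedLength (m : ℕ) : ℕ := (List.range m).findIdx fun j => decide (m ≤ α j)

variable {α} in
theorem lt_of_lt_determinedLength {j m : ℕ} (hj : j < determinedLength α m) : α j < m := by
  simpa using List.not_of_lt_findIdx hj

theorem le_determinedLength {n m : ℕ} (hnm : n ≤ m) (h : ∀ j < n, α j < m) :
    n ≤ determinedLength α m := by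
  rcases hnm.lt_or_eq with hlt | rfl
  · exact List.le_findIdx_of_not (by simpa) fun j hj => by simpa using h j hj
  · rw [determinedLength, List.findIdx_eq_length_of_false fun j hj => by
      simpa using h j (List.mem_range.1 hj), List.length_range]

theorem tendsto_determinedLength_iterate (k : ℕ) :
    Filter.Tendsto (determinedLength α)^[k] Filter.atTop Filter.atTop := by
  have h : Filter.Tendsto (determinedLength α) Filter.atTop Filter.atTop := by
    refine Filter.tendsto_atTop_atTop.2 fun n =>
      ⟨n + (Finset.range n).sup (α · + 1), fun m hm => le_determinedLength α (by omega) ?_⟩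
    intro j hj
    have := Finset.le_sup (f := (α · + 1)) (Finset.mem_range.2 hj)
    omega
  induction k with
  | zero => exact Filter.tendsto_id
  | succ k ih => exact ih.comp h

def imageWord (v : List 𝒜) : List 𝒜 :=
  (List.range (determinedLength α v.length)).map fun j => β j (v.take (α j + 1))

variable {α β} {T : (ℕ → 𝒜) → ℕ → 𝒜}
  (hT : ∀ x n, T x n = β n (List.ofFn fun i : Fin (α n + 1) => x i))
include hT

theorem imageWord_initSeg (x : ℕ → 𝒜) (m : ℕ) :
    imageWord α β (initSeg x m) = initSeg (T x) (determinedLength α m) :=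
  List.ext_getElem (by simp [imageWord]) fun j hj _ => by
    have hα : α j + 1 ≤ m := lt_of_lt_determinedLength (by simpa [imageWord] using hj)
    simp only [imageWord, List.getElem_map, List.getElem_range, take_initSeg, min_eq_left hα,
      getElem_initSeg, hT]
    rfl

theorem iterate_imageWord_initSeg (k : ℕ) (x : ℕ → 𝒜) (m : ℕ) :
    (imageWord α β)^[k] (initSeg x m) = initSeg (T^[k] x) ((determinedLength α)^[k] m) := by
  induction k generalizing x m with
  | zero => rfl
  | succ k ih => simp only [Function.iterate_succ_apply, imageWord_initSeg hT, ih]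

end PrefixApproximation

section HittingTimes

variable {𝒜 : Type*} [DecidableEq 𝒜] (α : ℕ → ℕ) (β : ℕ → List 𝒜 → 𝒜)

def hitsWithin (w v : List 𝒜) (N : ℕ) : Bool :=
  (List.range (N + 1)).any fun k => decide (((imageWord α β)^[k] v).take w.length = w)

variable {α β} {T : (ℕ → 𝒜) → ℕ → 𝒜}
  (hT : ∀ x n, T x n = β n (List.ofFn fun i : Fin (α n + 1) => x i))
include hT

theorem hitsWithin_initSeg_iff {w : List 𝒜} {x : ℕ → 𝒜} {L N : ℕ} :
    hitsWithin α β w (initSeg x L) N = true ↔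
      ∃ k ≤ N, w.length ≤ (determinedLength α)^[k] L ∧ T^[k] x ∈ cyl w := by
  simp [hitsWithin, iterate_imageWord_initSeg hT, take_initSeg_eq_iff]

variable [Fintype 𝒜] [TopologicalSpace 𝒜] [DiscreteTopology 𝒜] {A : Set (ℕ → 𝒜)}

theorem cyl_inter_nonempty_iff (hA : IsClosed A) (hne : A.Nonempty) (hinv : Set.MapsTo T A A)
    (hmin : ∀ x ∈ A, A ⊆ closure (Set.range fun n : ℕ => T^[n] x)) (w : List 𝒜) :
    (cyl w ∩ A).Nonempty ↔
      ∃ p : ℕ × ℕ, ∀ v ∈ allWords 𝒜 p.2, (cyl v ∩ A).Nonempty → hitsWithin α β w v p.1 = true := by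
  constructor
  · intro hw
    obtain ⟨N, hN⟩ := hA.isCompact.exists_forall_iterate_mem_of_minimal
      (continuous_of_apply_eq_ofFn hT) hmin (isOpen_cyl w) hw
    obtain ⟨L, hL⟩ := ((Filter.eventually_all_finset (Finset.range (N + 1))).2 fun k _ =>
      (tendsto_determinedLength_iterate α k).eventually_ge_atTop w.length).exists
    refine ⟨(N, L), fun v hv ⟨x, hxv, hxA⟩ => ?_⟩
    have hvL : v.length = L := mem_allWords.1 hv
    obtain rfl : initSeg x L = v := hvL ▸ mem_cyl_iff_initSeg_eq.1 hxv
    rw [hitsWithin_initSeg_iff hT]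
    obtain ⟨k, hkN, hk⟩ := hN x hxA
    exact ⟨k, hkN, hL k (Finset.mem_range.2 (Nat.lt_succ_of_le hkN)), hk⟩
  · rintro ⟨⟨N, L⟩, h⟩
    obtain ⟨x, hx⟩ := hne
    obtain ⟨k, -, -, hk⟩ := (hitsWithin_initSeg_iff hT).1 <|
      h _ (mem_allWords.2 (length_initSeg x L)) ⟨x, mem_cyl_iff_initSeg_eq.2 (by simp), hx⟩
    exact ⟨_, hk, hinv.iterate k hx⟩

end HittingTimes

section Computability

open Computable

variable {𝒜 : Type*} [Primcodable 𝒜] {α : ℕ → ℕ} {β : ℕ → List 𝒜 → 𝒜}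

theorem computable_determinedLength (hα : Computable α) : Computable (determinedLength α) := by
  have hfind : Primrec fun l : List Bool => l.findIdx id := Primrec.list_findIdx .id .snd
  refine (hfind.to_comp.comp (list_map (f := List.range) Primrec.list_range.to_comp
    (Primrec.nat_le.decide.to_comp.comp fst (hα.comp snd)).to₂)).of_eq fun m => ?_
  simp [determinedLength, List.findIdx_map]

theorem computable_imageWord (hα : Computable α) (hβ : Computable₂ β) :
    Computable (imageWord α β) :=
  list_map (Primrec.list_range.to_comp.comp ((computable_determinedLength hα).comp list_length))
    (hβ.comp snd (Primrec.list_take.to_comp.comp (succ.comp (hα.comp snd)) fst)).to₂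

theorem computable_hitsWithin [DecidableEq 𝒜] (hα : Computable α) (hβ : Computable₂ β) :
    Computable fun p : List 𝒜 × List 𝒜 × ℕ => hitsWithin α β p.1 p.2.1 p.2.2 := by
  refine list_any (Primrec.list_range.to_comp.comp (succ.comp (snd.comp snd))) ?_
  have hiter : Computable fun q : (List 𝒜 × List 𝒜 × ℕ) × ℕ => (imageWord α β)^[q.2] q.1.2.1 :=
    nat_iterate snd (fst.comp (snd.comp fst)) ((computable_imageWord hα hβ).comp snd).to₂
  exact (Primrec.eq.decide.to_comp.comp
    (Primrec.list_take.to_comp.comp (list_length.comp (fst.comp fst)) hiter) (fst.comp fst)).to₂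

end Computability

/-- If a computable map of Cantor space is minimal on a nonempty closed invariant set `A`
(every point of `A` has dense forward orbit in `A`), then for `n ∈ {1,2}`:
if the inner collection of `A` is Π_n, it is also Σ_n. -/
theorem stmt9 {𝒜 : Type} [Fintype 𝒜] [Primcodable 𝒜]
    [TopologicalSpace 𝒜] [DiscreteTopology 𝒜]
    {T : (ℕ → 𝒜) → (ℕ → 𝒜)} (hT : CantorComputable T)
    {A : Set (ℕ → 𝒜)} (hclosed : IsClosed A) (hne : A.Nonempty)
    (hinv : Set.MapsTo T A A)
    (hmin : ∀ x ∈ A, A ⊆ closure (Set.range fun n : ℕ => T^[n] x)) :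
    (PiOne {w : List 𝒜 | (cyl w ∩ A).Nonempty} →
      SigmaOne {w : List 𝒜 | (cyl w ∩ A).Nonempty}) ∧
    (PiTwo {w : List 𝒜 | (cyl w ∩ A).Nonempty} →
      SigmaTwo {w : List 𝒜 | (cyl w ∩ A).Nonempty}) := by
  classical
  obtain ⟨α, β, hα, hβ, hT⟩ := hT
  set F : List 𝒜 → ℕ × ℕ → List (List 𝒜) := fun _ p => allWords 𝒜 p.2
  set D : List 𝒜 → ℕ × ℕ → List 𝒜 → Bool := fun w p v => hitsWithin α β w v p.1
  have hF : Computable₂ F := primrec_allWords.to_comp.comp (Computable.snd.comp Computable.snd)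
  have hD : Computable fun q : List 𝒜 × (ℕ × ℕ) × List 𝒜 => D q.1 q.2.1 q.2.2 :=
    (computable_hitsWithin hα hβ).comp <| Computable.pair Computable.fst <|
      Computable.pair (Computable.snd.comp Computable.snd)
        (Computable.fst.comp (Computable.fst.comp Computable.snd))
  have hS : ∀ w, w ∈ {w : List 𝒜 | (cyl w ∩ A).Nonempty} ↔
      ∃ p, ∀ v ∈ F w p, v ∈ {w : List 𝒜 | (cyl w ∩ A).Nonempty} → D w p v = true :=
    cyl_inter_nonempty_iff hT hclosed hne hinv hmin
  exact ⟨fun h => h.sigmaOne_of_forall_mem hF hD hS, fun h => h.sigmaTwo_of_forall_mem hF hD hS⟩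
end
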